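/- arXiv:2303.09910 — 4 statements merged into one kernel-verified Lean document; each statement's English description precedes it below -/
import Mathlib

section
/- For any configuration of points p_1,...,p_M in a convex compact set A ⊆ ℝ^D and any nondecreasing continuous function g: ℝ≥0 → ℝ≥0 and any density φ: A → ℝ≥0, the Voronoi partition induced by p minimizes the locational optimization cost among all partitions: for any measurable partition O_1,...,O_M of A, the sum ∑_i ∫_{Voronoi cell W_{p,i}} g(‖q - p_i‖) φ(q) dq ≤ ∑_i ∫_{O_i} g(‖q - p_i‖) φ(q) dq. -/
/-!
On each Voronoi cell the cost integrand of its own seed is the pointwise minimum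
`m q = minⱼ g ‖q - pⱼ‖ φ q` of all the integrands, and the cells overlap only in
pieces of perpendicular bisectors, which are Lebesgue-null. Hence the Voronoi cost
equals `∫_A m`, while any partition `O` costs at least `∑ᵢ ∫_{Oᵢ} m = ∫_A m`.
-/

open MeasureTheory

noncomputable section

/-- The Voronoi cell of seed `p i` within the region `A`. -/
def voronoiCell {D M : ℕ} (A : Set (EuclideanSpace ℝ (Fin D)))
    (p : Fin M → EuclideanSpace ℝ (Fin D)) (i : Fin M) : Set (EuclideanSpace ℝ (Fin D)) :=
  {q ∈ A | ∀ j, j ≠ i → ‖q - p i‖ ≤ ‖q - p j‖}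

structure IsAEPartition {α ι : Type*} [MeasurableSpace α] (μ : Measure α) (A : Set α)
    (S : ι → Set α) : Prop where
  nullMeasurableSet : ∀ i, NullMeasurableSet (S i) μ
  subset : ∀ i, S i ⊆ A
  subset_iUnion : A ⊆ ⋃ i, S i
  aedisjoint : Pairwise fun i j => AEDisjoint μ (S i) (S j)

namespace IsAEPartition

variable {α ι : Type*} [MeasurableSpace α] {μ : Measure α} {A : Set α} {S T : ι → Set α}

theorem iUnion_eq (hS : IsAEPartition μ A S) : ⋃ i, S i = A :=
  subset_antisymm (Set.iUnion_subset hS.subset) hS.subset_iUnion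

theorem nullMeasurableSet_of_countable [Countable ι] (hS : IsAEPartition μ A S) :
    NullMeasurableSet A μ :=
  hS.iUnion_eq ▸ .iUnion hS.nullMeasurableSet

theorem sum_setIntegral [Fintype ι] (hS : IsAEPartition μ A S) {f : α → ℝ}
    (hf : IntegrableOn f A μ) : ∑ i, ∫ x in S i, f x ∂μ = ∫ x in A, f x ∂μ := by
  rw [← hS.iUnion_eq, integral_iUnion_ae hS.nullMeasurableSet hS.aedisjoint (hS.iUnion_eq ▸ hf),
    tsum_fintype]

theorem sum_setIntegral_le_sum_setIntegral [Fintype ι] [Nonempty ι]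
    (hS : IsAEPartition μ A S) (hT : IsAEPartition μ A T) {f : ι → α → ℝ}
    (hf : ∀ i, IntegrableOn (f i) A μ) (hmin : ∀ i, ∀ x ∈ S i, ∀ j, f i x ≤ f j x) :
    ∑ i, ∫ x in S i, f i x ∂μ ≤ ∑ i, ∫ x in T i, f i x ∂μ := by
  set m : α → ℝ := Finset.univ.inf' Finset.univ_nonempty f
  have hm_le : ∀ i x, m x ≤ f i x := fun i x => by
    simpa only [m, Finset.inf'_apply] using Finset.inf'_le (fun j => f j x) (Finset.mem_univ i)
  have hm_eq : ∀ i, ∀ x ∈ S i, m x = f i x := fun i x hx =>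
    (hm_le i x).antisymm <| by
      simpa only [m, Finset.inf'_apply] using Finset.le_inf' _ _ fun j _ => hmin i x hx j
  have hm : IntegrableOn m A μ :=
    Finset.inf'_induction (p := (IntegrableOn · A μ)) _ _ (fun _ h₁ _ h₂ => h₁.inf h₂)
      fun i _ => hf i
  calc ∑ i, ∫ x in S i, f i x ∂μ
      = ∑ i, ∫ x in S i, m x ∂μ := Finset.sum_congr rfl fun i _ =>
        setIntegral_congr_fun₀ (hS.nullMeasurableSet i) fun x hx => (hm_eq i x hx).symm
    _ = ∑ i, ∫ x in T i, m x ∂μ := by rw [hS.sum_setIntegral hm, hT.sum_setIntegral hm]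
    _ ≤ ∑ i, ∫ x in T i, f i x ∂μ := Finset.sum_le_sum fun i _ =>
        setIntegral_mono_ae_restrict (hm.mono_set (hT.subset i)) ((hf i).mono_set (hT.subset i))
          (Filter.Eventually.of_forall fun x => hm_le i x)

end IsAEPartition

section Voronoi

variable {D M : ℕ} {A : Set (EuclideanSpace ℝ (Fin D))} {p : Fin M → EuclideanSpace ℝ (Fin D)}

theorem voronoiCell_subset (i : Fin M) : voronoiCell A p i ⊆ A := fun _ hq => hq.1

theorem norm_sub_le_of_mem_voronoiCell {i : Fin M} {q : EuclideanSpace ℝ (Fin D)}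
    (hq : q ∈ voronoiCell A p i) (j : Fin M) : ‖q - p i‖ ≤ ‖q - p j‖ := by
  rcases eq_or_ne j i with rfl | hji
  · rfl
  · exact hq.2 j hji

theorem voronoiCell_eq_inter_iInter (i : Fin M) :
    voronoiCell A p i = A ∩ ⋂ j, ⋂ (_ : j ≠ i), {q | ‖q - p i‖ ≤ ‖q - p j‖} := by
  ext q
  simp [voronoiCell]

theorem nullMeasurableSet_voronoiCell {μ : Measure (EuclideanSpace ℝ (Fin D))}
    (hA : NullMeasurableSet A μ) (i : Fin M) : NullMeasurableSet (voronoiCell A p i) μ := by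
  rw [voronoiCell_eq_inter_iInter]
  refine hA.inter (IsClosed.measurableSet ?_).nullMeasurableSet
  exact isClosed_iInter fun j => isClosed_iInter fun _ =>
    isClosed_le (by fun_prop) (by fun_prop)

theorem subset_iUnion_voronoiCell [Nonempty (Fin M)] : A ⊆ ⋃ i, voronoiCell A p i := by
  intro q hq
  obtain ⟨i, -, hi⟩ := Finset.exists_min_image Finset.univ (fun j => ‖q - p j‖)
    Finset.univ_nonempty
  exact Set.mem_iUnion.mpr ⟨i, hq, fun j _ => hi j (Finset.mem_univ j)⟩

theorem voronoiCell_inter_voronoiCell_subset_perpBisector {i j : Fin M} (hij : i ≠ j) :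
    voronoiCell A p i ∩ voronoiCell A p j ⊆ AffineSubspace.perpBisector (p i) (p j) := by
  rintro q ⟨hqi, hqj⟩
  rw [SetLike.mem_coe, AffineSubspace.mem_perpBisector_iff_dist_eq, dist_eq_norm, dist_eq_norm]
  exact (hqi.2 j hij.symm).antisymm (hqj.2 i hij)

theorem measure_voronoiCell_inter_voronoiCell (μ : Measure (EuclideanSpace ℝ (Fin D)))
    [μ.IsAddHaarMeasure] (hp : Function.Injective p) {i j : Fin M} (hij : i ≠ j) :
    μ (voronoiCell A p i ∩ voronoiCell A p j) = 0 :=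
  measure_mono_null (voronoiCell_inter_voronoiCell_subset_perpBisector hij) <|
    Measure.addHaar_affineSubspace μ _ <|
      AffineSubspace.perpBisector_eq_top.not.mpr (hp.ne hij)

theorem isAEPartition_voronoiCell [Nonempty (Fin M)] {μ : Measure (EuclideanSpace ℝ (Fin D))}
    [μ.IsAddHaarMeasure] (hA : NullMeasurableSet A μ) (hp : Function.Injective p) :
    IsAEPartition μ A (voronoiCell A p) :=
  ⟨nullMeasurableSet_voronoiCell hA, voronoiCell_subset, subset_iUnion_voronoiCell,
    fun _ _ hij => measure_voronoiCell_inter_voronoiCell μ hp hij⟩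

end Voronoi

theorem voronoi_minimizes_locational_cost_general (D M : ℕ)
    (A : Set (EuclideanSpace ℝ (Fin D)))
    (p : Fin M → EuclideanSpace ℝ (Fin D))
    (hpinj : Function.Injective p)
    (g : ℝ → ℝ) (hgmono : Monotone g)
    (φ : EuclideanSpace ℝ (Fin D) → ℝ) (hφnonneg : ∀ q ∈ A, 0 ≤ φ q)
    (hint : ∀ i, IntegrableOn (fun q => g ‖q - p i‖ * φ q) A)
    (O : Fin M → Set (EuclideanSpace ℝ (Fin D)))
    (hOmeas : ∀ i, MeasurableSet (O i)) (hOsub : ∀ i, O i ⊆ A)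
    (hOcover : A ⊆ ⋃ i, O i)
    (hOdisj : ∀ i j, i ≠ j → volume (O i ∩ O j) = 0) :
    ∑ i, ∫ q in voronoiCell A p i, g ‖q - p i‖ * φ q ≤
      ∑ i, ∫ q in O i, g ‖q - p i‖ * φ q := by
  rcases isEmpty_or_nonempty (Fin M) with _ | _
  · simp
  have hO : IsAEPartition volume A O :=
    ⟨fun i => (hOmeas i).nullMeasurableSet, hOsub, hOcover, hOdisj⟩
  have hV := isAEPartition_voronoiCell hO.nullMeasurableSet_of_countable hpinj
  refine hV.sum_setIntegral_le_sum_setIntegral hO hint fun i q hq j => ?_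
  exact mul_le_mul_of_nonneg_right (hgmono (norm_sub_le_of_mem_voronoiCell hq j))
    (hφnonneg q (voronoiCell_subset i hq))

/-- The Voronoi partition minimizes the locational optimization cost among all
measurable partitions of `A`. -/
theorem voronoi_minimizes_locational_cost (D M : ℕ)
    (A : Set (EuclideanSpace ℝ (Fin D))) (hAconv : Convex ℝ A) (hAcomp : IsCompact A)
    (p : Fin M → EuclideanSpace ℝ (Fin D)) (hpA : ∀ i, p i ∈ A)
    (hpinj : Function.Injective p)
    (g : ℝ → ℝ) (hgcont : Continuous g) (hgmono : Monotone g)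
    (hgnonneg : ∀ x : ℝ, 0 ≤ x → 0 ≤ g x)
    (φ : EuclideanSpace ℝ (Fin D) → ℝ) (hφnonneg : ∀ q ∈ A, 0 ≤ φ q)
    (hφint : IntegrableOn φ A)
    (hint : ∀ i, IntegrableOn (fun q => g ‖q - p i‖ * φ q) A)
    (O : Fin M → Set (EuclideanSpace ℝ (Fin D)))
    (hOmeas : ∀ i, MeasurableSet (O i)) (hOsub : ∀ i, O i ⊆ A)
    (hOcover : A ⊆ ⋃ i, O i)
    (hOdisj : ∀ i j, i ≠ j → volume (O i ∩ O j) = 0) :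
    ∑ i, ∫ q in voronoiCell A p i, g ‖q - p i‖ * φ q ≤
      ∑ i, ∫ q in O i, g ‖q - p i‖ * φ q :=
  voronoi_minimizes_locational_cost_general D M A p hpinj g hgmono φ hφnonneg hint O hOmeas hOsub
    hOcover hOdisj
end
end

section
/- If the positions of all agents satisfy the eroded-Voronoi containment p_i ∈ W_{p,i} ⊖ B_{r_max} for all i at some time, then the collision-avoidance condition ‖p_i - p_j‖ ≥ 2 r_max holds for all i ≠ j. -/
noncomputable section

/-- Pontryagin erosion of a set by the closed ball of radius `ρ`. -/
def erode {E : Type*} [NormedAddCommGroup E] (V : Set E) (ρ : ℝ) : Set E :=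
  {x | ∀ y : E, ‖y‖ ≤ ρ → x + y ∈ V}

theorem erode_mono {E : Type*} [NormedAddCommGroup E] {V W : Set E} (hVW : V ⊆ W) (ρ : ℝ) :
    erode V ρ ⊆ erode W ρ :=
  fun _ hx y hy => hVW (hx y hy)

theorem voronoiCell_subset_closer_than {D M : ℕ} (A : Set (EuclideanSpace ℝ (Fin D)))
    (p : Fin M → EuclideanSpace ℝ (Fin D)) {i j : Fin M} (hji : j ≠ i) :
    voronoiCell A p i ⊆ {q | ‖q - p i‖ ≤ ‖q - p j‖} :=
  fun _ hq => hq.2 j hji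

theorem two_mul_le_norm_sub_of_mem_erode_closer_than {E : Type*} [NormedAddCommGroup E]
    [NormedSpace ℝ E] {x z : E} (hxz : x ≠ z) {r : ℝ}
    (hx : x ∈ erode {q | ‖q - x‖ ≤ ‖q - z‖} r) : 2 * r ≤ ‖x - z‖ := by
  set d := ‖x - z‖
  have hd : 0 < d := norm_pos_iff.mpr (sub_ne_zero.mpr hxz)
  rcases lt_or_ge r 0 with hr | hr
  · linarith
  -- the point at distance `r` from `x` towards `z` is at distance `|d - r|` from `z`
  set y : E := (r / d) • (z - x)
  have hy : ‖y‖ = r := by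
    rw [norm_smul, norm_sub_rev, Real.norm_of_nonneg (div_nonneg hr hd.le),
      div_mul_cancel₀ _ hd.ne']
  have hyz : ‖x + y - z‖ = |d - r| := by
    have : x + y - z = (1 - r / d) • (x - z) := by
      simp only [y, sub_smul, one_smul, smul_sub]
      abel
    have hdr : d - r = (1 - r / d) * d := by field_simp
    rw [this, norm_smul, Real.norm_eq_abs, hdr, abs_mul, abs_of_pos hd]
  have hcloser : r ≤ |d - r| := by
    simpa only [Set.mem_ofPred_eq, add_sub_cancel_left, hy, hyz] using hx y hy.le
  rcases abs_cases (d - r) with ⟨habs, _⟩ | ⟨habs, _⟩ <;> linarith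

theorem eroded_voronoi_implies_collision_avoidance_general (D M : ℕ)
    (A : Set (EuclideanSpace ℝ (Fin D)))
    (p : Fin M → EuclideanSpace ℝ (Fin D)) (hpinj : Function.Injective p)
    (rmax : ℝ)
    (hmem : ∀ i, p i ∈ erode (voronoiCell A p i) rmax) :
    ∀ i j, i ≠ j → 2 * rmax ≤ ‖p i - p j‖ := fun i _ hij =>
  two_mul_le_norm_sub_of_mem_erode_closer_than (hpinj.ne hij)
    (erode_mono (voronoiCell_subset_closer_than A p (Ne.symm hij)) rmax (hmem i))

/-- If every agent's position lies in its Voronoi cell eroded by the ball of radius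
`r_max`, then all agents are pairwise at distance at least `2 r_max`. -/
theorem eroded_voronoi_implies_collision_avoidance (D M : ℕ)
    (A : Set (EuclideanSpace ℝ (Fin D)))
    (p : Fin M → EuclideanSpace ℝ (Fin D)) (hpinj : Function.Injective p)
    (rmax : ℝ) (hr : 0 ≤ rmax)
    (hmem : ∀ i, p i ∈ erode (voronoiCell A p i) rmax) :
    ∀ i j, i ≠ j → 2 * rmax ≤ ‖p i - p j‖ :=
  eroded_voronoi_implies_collision_avoidance_general D M A p hpinj rmax hmem
end
end

section
/- (Exponential cost controllability implies relaxed dynamic programming decrease; scalar version.) Suppose a sequence of optimal value functions V_N satisfies V_N ≤ γ ℓ* for all N and ℓ* ≥ 0, with γ > 1. Define ᾱ_N = 1 - ((γ-1)/γ)^N · γ². Then for N large enough that ᾱ_N > 0, the inequality ℓ̂ ≤ ((γ-1)/γ)^{N-1} · V_N, combined with V_N-candidate cost increase at most (γ'-1)ℓ̂ − ℓ*, yields V_N(next) − V_N(current) ≤ −ᾱ_N ℓ*(current), where ℓ̂ denotes the terminal-step stage cost. In particular, 1 − ((γ−1)/γ)^N γ² > 0 for all N > 2 log γ / log(γ/(γ−1)).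 -/
open Real

-- Equality for `n ≠ 0`; at `n = 0` the truncated `0 - 1 = 0` leaves `r ≤ 1`.
lemma pow_sub_one_mul_le_pow {M : Type*} [Monoid M] [Preorder M] {r : M} (hr : r ≤ 1) :
    ∀ n : ℕ, r ^ (n - 1) * r ≤ r ^ n
  | 0 => by simpa using hr
  | n + 1 => (pow_sub_one_mul n.succ_ne_zero r).le

lemma lt_pow_of_log_div_log_lt {a q : ℝ} {n : ℕ} (ha : 0 < a) (hq : 1 < q)
    (h : log a / log q < n) : a < q ^ n :=
  (lt_pow_iff_log_lt ha (by linarith)).2 ((div_lt_iff₀ (log_pos hq)).1 h)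

lemma one_sub_pow_mul_sq_pos {γ : ℝ} {n : ℕ} (hγ : 1 < γ)
    (hn : 2 * log γ / log (γ / (γ - 1)) < n) : 0 < 1 - ((γ - 1) / γ) ^ n * γ ^ 2 := by
  have hq : 1 < γ / (γ - 1) := (one_lt_div (by linarith)).2 (by linarith)
  have hsq : γ ^ 2 < (γ / (γ - 1)) ^ n :=
    lt_pow_of_log_div_log_lt (by positivity) hq (by rwa [log_pow, Nat.cast_ofNat])
  rw [← inv_div, inv_pow, sub_pos]
  exact (inv_mul_lt_one₀ (by positivity)).2 hsq

theorem relaxed_dp_decrease_general (γ : ℝ) (hγ : 1 < γ) (N : ℕ)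
    (ℓstar ℓhat Vcur Vnext : ℝ)
    (hℓstar : 0 ≤ ℓstar)
    (h1 : ℓhat ≤ ((γ - 1) / γ) ^ (N - 1) * Vcur)
    (h2 : Vcur ≤ γ * ℓstar)
    (h3 : Vnext - Vcur ≤ (γ - 1) * ℓhat - ℓstar) :
    Vnext - Vcur ≤ -(1 - ((γ - 1) / γ) ^ N * γ ^ 2) * ℓstar ∧
      ∀ N' : ℕ, 2 * Real.log γ / Real.log (γ / (γ - 1)) < (N' : ℝ) →
        0 < 1 - ((γ - 1) / γ) ^ N' * γ ^ 2 := by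
  set r := (γ - 1) / γ with hr
  have hγ0 : 0 < γ := by linarith
  have hr0 : 0 ≤ r := div_nonneg (by linarith) hγ0.le
  have hr1 : r ≤ 1 := div_le_one_of_le₀ (by linarith) hγ0.le
  have hterminal : (γ - 1) * ℓhat ≤ r ^ N * γ ^ 2 * ℓstar :=
    calc (γ - 1) * ℓhat ≤ (γ - 1) * (r ^ (N - 1) * (γ * ℓstar)) := by
          gcongr (γ - 1) * ?_
          exact h1.trans (by gcongr)
      _ = r ^ (N - 1) * r * (γ ^ 2 * ℓstar) := by rw [hr]; field_simp
      _ ≤ r ^ N * (γ ^ 2 * ℓstar) := by gcongr; exact pow_sub_one_mul_le_pow hr1 N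
      _ = r ^ N * γ ^ 2 * ℓstar := by ring
  exact ⟨by linarith, fun N' hN' => one_sub_pow_mul_sq_pos hγ hN'⟩

/-- Exponential cost controllability implies a relaxed dynamic programming decrease
(scalar version): from `(γ/(γ-1))^{N-1} ℓ̂ ≤ V_cur ≤ γ ℓ*` and the candidate-cost bound
`V_next - V_cur ≤ (γ - 1) ℓ̂ - ℓ*` one gets `V_next - V_cur ≤ -ᾱ_N ℓ*` with
`ᾱ_N = 1 - ((γ-1)/γ)^N γ²`; moreover `ᾱ_N > 0` for all `N > 2 log γ / log(γ/(γ-1))`. -/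
theorem relaxed_dp_decrease (γ : ℝ) (hγ : 1 < γ) (N : ℕ)
    (ℓstar ℓhat Vcur Vnext : ℝ)
    (hℓstar : 0 ≤ ℓstar) (hℓhat : 0 ≤ ℓhat)
    (h1 : ℓhat ≤ ((γ - 1) / γ) ^ (N - 1) * Vcur)
    (h2 : Vcur ≤ γ * ℓstar)
    (h3 : Vnext - Vcur ≤ (γ - 1) * ℓhat - ℓstar) :
    Vnext - Vcur ≤ -(1 - ((γ - 1) / γ) ^ N * γ ^ 2) * ℓstar ∧
      ∀ N' : ℕ, 2 * Real.log γ / Real.log (γ / (γ - 1)) < (N' : ℝ) →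
        0 < 1 - ((γ - 1) / γ) ^ N' * γ ^ 2 :=
  relaxed_dp_decrease_general γ hγ N ℓstar ℓhat Vcur Vnext hℓstar h1 h2 h3
end

section
/- (Half-distance property of Voronoi bisectors.) For distinct points p_i, p_j ∈ ℝ^D and any q with ‖q − p_i‖ = ‖q − p_j‖, it holds that ‖q − p_i‖ ≥ ‖p_i − p_j‖/2. Consequently, if q_i ∈ W_{p,i} ⊖ B_{r_i} and q_j ∈ W_{p,j} ⊖ B_{r_j} for i ≠ j, then ‖q_i − q_j‖ ≥ r_i + r_j. -/
noncomputable section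

/-- If `q` is at least as close to `a` as to `b`, then `q` lies in the half-space
`2⟪q, b - a⟫ ≤ ‖b‖² - ‖a‖²`. -/
lemma key_halfspace {E : Type*} [NormedAddCommGroup E] [InnerProductSpace ℝ E]
    (a b q : E) (h : ‖q - a‖ ≤ ‖q - b‖) :
    2 * (inner ℝ q (b - a) : ℝ) ≤ ‖b‖^2 - ‖a‖^2 := by
  have h2 : ‖q - a‖^2 ≤ ‖q - b‖^2 :=
    pow_le_pow_left₀ (norm_nonneg _) h 2
  rw [norm_sub_sq_real, norm_sub_sq_real] at h2
  rw [inner_sub_right]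
  linarith

/-- Half-distance property of Voronoi bisectors, and separation of eroded Voronoi cells:
any bisector point is at least half the seed distance from each seed, and points in
Voronoi cells eroded by radii `r i`, `r j` are at distance at least `r i + r j`. -/
theorem bisector_half_distance_and_eroded_separation (D M : ℕ)
    (A : Set (EuclideanSpace ℝ (Fin D)))
    (p : Fin M → EuclideanSpace ℝ (Fin D)) (hpinj : Function.Injective p)
    (r : Fin M → ℝ) (hr : ∀ i, 0 ≤ r i) (i j : Fin M) (hij : i ≠ j) :
    (∀ q : EuclideanSpace ℝ (Fin D), ‖q - p i‖ = ‖q - p j‖ →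
      ‖p i - p j‖ / 2 ≤ ‖q - p i‖) ∧
    (∀ qi qj : EuclideanSpace ℝ (Fin D),
      qi ∈ erode (voronoiCell A p i) (r i) → qj ∈ erode (voronoiCell A p j) (r j) →
        r i + r j ≤ ‖qi - qj‖) := by
  constructor
  · intro q hq
    have h2 : ‖p i - q‖ = ‖q - p i‖ := norm_sub_rev _ _
    have h3 : ‖p i - p j‖ ≤ ‖p i - q‖ + ‖q - p j‖ := by
      calc ‖p i - p j‖ = ‖(p i - q) + (q - p j)‖ := by abel_nf
        _ ≤ ‖p i - q‖ + ‖q - p j‖ := norm_add_le _ _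
    linarith [h3, h2 ▸ hq]
  · intro qi qj hqi hqj
    set v : EuclideanSpace ℝ (Fin D) := p j - p i with hv
    have hvne : v ≠ 0 := sub_ne_zero.mpr fun h => hij (hpinj h).symm
    have hvpos : 0 < ‖v‖ := norm_pos_iff.mpr hvne
    -- push qi by r i in direction v
    have hyi : ‖(r i / ‖v‖) • v‖ = r i := by
      rw [norm_smul, Real.norm_eq_abs, abs_of_nonneg (div_nonneg (hr i) hvpos.le),
        div_mul_cancel₀ _ hvpos.ne']
    have hyj : ‖(r j / ‖v‖) • (-v)‖ = r j := by
      rw [norm_smul, Real.norm_eq_abs, abs_of_nonneg (div_nonneg (hr j) hvpos.le),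
        norm_neg, div_mul_cancel₀ _ hvpos.ne']
    have hi := hqi _ hyi.le
    have hj := hqj _ hyj.le
    have hi2 : ‖qi + (r i / ‖v‖) • v - p i‖ ≤ ‖qi + (r i / ‖v‖) • v - p j‖ := hi.2 j hij.symm
    have hj2 : ‖qj + (r j / ‖v‖) • (-v) - p j‖ ≤ ‖qj + (r j / ‖v‖) • (-v) - p i‖ :=
      hj.2 i hij
    have Hi := key_halfspace (p i) (p j) _ hi2
    have Hj := key_halfspace (p j) (p i) _ hj2
    have hvv : (inner ℝ v v : ℝ) = ‖v‖^2 := real_inner_self_eq_norm_sq v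
    have eHi : (inner ℝ qi v : ℝ) + r i * ‖v‖ ≤ (‖p j‖^2 - ‖p i‖^2) / 2 := by
      rw [inner_add_left, real_inner_smul_left, hvv] at Hi
      have : r i / ‖v‖ * ‖v‖^2 = r i * ‖v‖ := by
        field_simp
      rw [this] at Hi
      linarith
    have eHj : -(inner ℝ qj v : ℝ) + r j * ‖v‖ ≤ -((‖p j‖^2 - ‖p i‖^2) / 2) := by
      have hswap : p i - p j = -v := by rw [hv]; abel
      simp only [hswap, inner_add_left, real_inner_smul_left, inner_neg_left,
        inner_neg_right, neg_neg, hvv] at Hj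
      have : r j / ‖v‖ * ‖v‖^2 = r j * ‖v‖ := by
        field_simp
      linarith
    have hsum : (r i + r j) * ‖v‖ ≤ (inner ℝ (qj - qi) v : ℝ) := by
      rw [inner_sub_left]; linarith
    have hcs : (inner ℝ (qj - qi) v : ℝ) ≤ ‖qj - qi‖ * ‖v‖ := real_inner_le_norm _ _
    have : (r i + r j) * ‖v‖ ≤ ‖qj - qi‖ * ‖v‖ := hsum.trans hcs
    have hfinal : r i + r j ≤ ‖qj - qi‖ := le_of_mul_le_mul_right this hvpos
    rwa [norm_sub_rev] at hfinal
end
end
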